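/- Let X be a real Gaussian random variable with mean μ and variance σ² > 0, let m ≥ 1 be an integer, and set a := Cov(X, [X]_m)/σ². Then |1 − a| ≤ (1/m)·√(2/(π σ²)). -/

import Mathlib

open MeasureTheory ProbabilityTheory Filter Set
open scoped ENNReal NNReal

/-- Uniform quantization with step size `1/m`: `[x]_m = ⌊m x⌋ / m`. -/
noncomputable def quant (m : ℕ) (x : ℝ) : ℝ := ⌊(m : ℝ) * x⌋ / m

/-- Covariance of two real random variables. -/
noncomputable def cov {Ω : Type*} [MeasurableSpace Ω] (μ : Measure Ω) (X Y : Ω → ℝ) : ℝ :=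
  ∫ ω, (X ω - ∫ x, X x ∂μ) * (Y ω - ∫ x, Y x ∂μ) ∂μ

/-- A probability measure on `ℝ²` is (bivariate) Gaussian iff every linear functional
pushes it forward to a one-dimensional Gaussian law. -/
def IsGaussianPair (π : Measure (ℝ × ℝ)) : Prop :=
  IsProbabilityMeasure π ∧
    ∀ a b : ℝ, ∃ (c : ℝ) (v : ℝ≥0), π.map (fun p => a * p.1 + b * p.2) = gaussianReal c v

section Aux

open Real

lemma gpdf_eq (c : ℝ) (v : ℝ≥0) (x : ℝ) :
    gaussianPDFReal c v x = (√(2 * π * v))⁻¹ * rexp (-(2 * (v:ℝ))⁻¹ * (x - c)^2) := by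
  rw [gaussianPDFReal]
  congr 1
  ring

lemma integral_gaussianReal' {c : ℝ} {v : ℝ≥0} (hv : v ≠ 0) (g : ℝ → ℝ) :
    ∫ x, g x ∂(gaussianReal c v) = ∫ x, gaussianPDFReal c v x * g x := by
  rw [gaussianReal_of_var_ne_zero _ hv, gaussianPDF_def]
  have h1 : (fun x => ENNReal.ofReal (gaussianPDFReal c v x))
      = fun x => (((gaussianPDFReal c v x).toNNReal : ℝ≥0) : ℝ≥0∞) := rfl
  rw [h1, integral_withDensity_eq_integral_smul
    ((measurable_gaussianPDFReal c v).real_toNNReal) g]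
  congr 1; ext x
  simp [NNReal.smul_def, Real.coe_toNNReal _ (gaussianPDFReal_nonneg c v x)]

lemma integrable_gaussianReal_iff {c : ℝ} {v : ℝ≥0} (hv : v ≠ 0) {g : ℝ → ℝ} :
    Integrable g (gaussianReal c v) ↔
      Integrable (fun x => g x * gaussianPDFReal c v x) volume := by
  rw [gaussianReal_of_var_ne_zero _ hv, gaussianPDF_def,
    integrable_withDensity_iff (measurable_gaussianPDFReal c v).ennreal_ofReal
      (ae_of_all _ fun x => ENNReal.ofReal_lt_top)]
  simp_rw [ENNReal.toReal_ofReal (gaussianPDFReal_nonneg c v _)]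

lemma integrable_sq_exp {b : ℝ} (hb : 0 < b) :
    Integrable (fun x : ℝ => x ^ 2 * rexp (-b * x ^ 2)) := by
  have h2 : (0:ℝ) < b / 2 := by linarith
  refine ((integrable_exp_neg_mul_sq h2).const_mul (2 / b)).mono'
    ((continuous_pow 2).mul (by continuity)).aestronglyMeasurable (ae_of_all _ fun x => ?_)
  have hx : 0 ≤ x ^ 2 * rexp (-b * x ^ 2) := by positivity
  rw [Real.norm_eq_abs, abs_of_nonneg hx]
  have key : x ^ 2 * rexp (-(b/2) * x ^ 2) ≤ 2 / b := by
    have h1 : b / 2 * x ^ 2 ≤ rexp (b / 2 * x ^ 2) := by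
      have := Real.add_one_le_exp (b / 2 * x ^ 2)
      nlinarith [sq_nonneg x]
    have heq : x ^ 2 * rexp (-(b/2) * x ^ 2) = x ^ 2 / rexp (b/2 * x ^ 2) := by
      rw [eq_div_iff (Real.exp_pos _).ne', mul_assoc, ← Real.exp_add]
      ring_nf
      rw [Real.exp_zero, mul_one]
    rw [heq, div_le_iff₀ (Real.exp_pos _)]
    calc x ^ 2 = 2 / b * (b / 2 * x ^ 2) := by field_simp
    _ ≤ 2 / b * rexp (b / 2 * x ^ 2) := by
        apply mul_le_mul_of_nonneg_left h1; positivity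
  calc x ^ 2 * rexp (-b * x ^ 2)
      = (x ^ 2 * rexp (-(b/2) * x^2)) * rexp (-(b/2) * x ^ 2) := by
        rw [mul_assoc, ← Real.exp_add]; ring_nf
    _ ≤ 2 / b * rexp (-(b / 2) * x ^ 2) :=
        mul_le_mul_of_nonneg_right key (Real.exp_nonneg _)

lemma integrable_sq_gauss (c : ℝ) {v : ℝ≥0} (hv : v ≠ 0) :
    Integrable (fun x => (x - c)^2) (gaussianReal c v) := by
  have hvp : (0:ℝ) < (v:ℝ) := by positivity
  have hb : (0:ℝ) < (2 * (v:ℝ))⁻¹ := by positivity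
  rw [integrable_gaussianReal_iff hv]
  have heq : (fun x => (x - c)^2 * gaussianPDFReal c v x)
      = fun x => (√(2 * π * v))⁻¹ *
        ((fun y => y ^ 2 * rexp (-(2 * (v:ℝ))⁻¹ * y ^ 2)) (x - c)) := by
    ext x
    rw [gpdf_eq]
    ring
  rw [heq]
  exact (((integrable_sq_exp hb).comp_sub_right c)).const_mul _

lemma integrable_gauss_of_bound (c : ℝ) {v : ℝ≥0} (hv : v ≠ 0) {g : ℝ → ℝ}
    (hg : Measurable g) (K₁ K₂ : ℝ) (hbd : ∀ x, |g x| ≤ K₁ + K₂ * (x - c)^2) :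
    Integrable g (gaussianReal c v) := by
  have hK : Integrable (fun x => K₁ + K₂ * (x - c)^2) (gaussianReal c v) :=
    (integrable_const K₁).add ((integrable_sq_gauss c hv).const_mul K₂)
  exact hK.mono' hg.aestronglyMeasurable (ae_of_all _ fun x => by
    rw [Real.norm_eq_abs]; exact hbd x)

lemma integral_id_gauss₀ (v : ℝ≥0) : ∫ x, x ∂(gaussianReal 0 v) = 0 := by
  have hone : (⟨(-1:ℝ)^2, sq_nonneg _⟩ : ℝ≥0) = 1 := by ext; norm_num
  have hmap : (gaussianReal 0 v).map (fun x => (-1:ℝ) * x) = gaussianReal 0 v := by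
    rw [gaussianReal_map_const_mul]
    congr 1
    · simp
    · ext; simp
  have h1 : ∫ x, x ∂(gaussianReal 0 v) = ∫ x, (-1:ℝ) * x ∂(gaussianReal 0 v) := by
    conv_lhs => rw [← hmap]
    exact integral_map (measurable_const_mul _).aemeasurable aestronglyMeasurable_id
  have h2 : ∫ x, (-1:ℝ) * x ∂(gaussianReal 0 v) = -∫ x, x ∂(gaussianReal 0 v) := by
    rw [show (fun x : ℝ => (-1:ℝ) * x) = fun x : ℝ => -x by ext x; ring, integral_neg]
  rw [h2] at h1
  linarith

lemma gauss_eq_map (c : ℝ) (v : ℝ≥0) :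
    gaussianReal c v = (gaussianReal 0 v).map (· + c) := by
  rw [gaussianReal_map_add_const, zero_add]

lemma integrable_id_gauss₀ {v : ℝ≥0} (hv : v ≠ 0) :
    Integrable (fun x : ℝ => x) (gaussianReal 0 v) := by
  refine integrable_gauss_of_bound 0 hv measurable_id 1 1 fun x => ?_
  rw [sub_zero, one_mul]
  nlinarith [sq_nonneg (|x| - 1), abs_nonneg x, sq_abs x]

lemma integral_id_gauss (c : ℝ) {v : ℝ≥0} (hv : v ≠ 0) :
    ∫ x, x ∂(gaussianReal c v) = c := by
  rw [gauss_eq_map c v]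
  rw [show (∫ x, x ∂((gaussianReal 0 v).map (· + c))) = ∫ x, x + c ∂(gaussianReal 0 v)
    from integral_map (measurable_add_const c).aemeasurable aestronglyMeasurable_id]
  rw [integral_add (integrable_id_gauss₀ hv) (integrable_const c), integral_id_gauss₀,
    integral_const]
  simp

lemma integral_sq_gauss (c : ℝ) {v : ℝ≥0} (hv : v ≠ 0) :
    ∫ x, (x - c)^2 ∂(gaussianReal c v) = (v : ℝ) := by
  have hvp : (0:ℝ) < (v:ℝ) := by positivity
  have hb : (0:ℝ) < (2 * (v:ℝ))⁻¹ := by positivity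
  have hred : ∫ x, (x - c)^2 ∂(gaussianReal c v) = ∫ x, x^2 ∂(gaussianReal 0 v) := by
    rw [gauss_eq_map c v, integral_map (measurable_add_const c).aemeasurable
      (Measurable.aestronglyMeasurable (by fun_prop))]
    simp
  rw [hred, integral_gaussianReal' hv]
  have heq : (fun x => gaussianPDFReal 0 v x * x ^ 2)
      = fun x => (√(2 * π * v))⁻¹ * (|x| ^ 2 * rexp (-(2 * (v:ℝ))⁻¹ * |x| ^ 2)) := by
    ext x
    rw [gpdf_eq, sub_zero, sq_abs]
    ring
  rw [heq, integral_const_mul,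
    integral_comp_abs (f := fun t => t ^ 2 * rexp (-(2 * (v:ℝ))⁻¹ * t ^ 2))]
  have hIoi : ∫ x in Ioi (0:ℝ), x ^ 2 * rexp (-(2 * (v:ℝ))⁻¹ * x ^ 2)
      = ((2 * (v:ℝ))⁻¹) ^ (-(3:ℝ)/2) * (1/2) * Real.Gamma (3/2) := by
    have := integral_rpow_mul_exp_neg_mul_rpow (p := 2) (q := 2) two_pos (by norm_num) hb
    simp_rw [show ∀ x : ℝ, x ^ (2:ℝ) = x ^ 2 from fun x => by
      rw [show (2:ℝ) = ((2:ℕ):ℝ) by norm_num, Real.rpow_natCast]] at this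
    rw [this]
    norm_num
  have hGamma : Real.Gamma (3/2) = √π / 2 := by
    rw [show (3:ℝ)/2 = 1/2 + 1 by norm_num, Real.Gamma_add_one (by norm_num),
      Real.Gamma_one_half_eq]
    ring
  rw [hIoi, hGamma]
  -- algebra
  set s : ℝ := √(2 * (v:ℝ)) with hs_def
  have hs : 0 < s := Real.sqrt_pos.mpr (by positivity)
  have hs2 : s ^ 2 = 2 * (v:ℝ) := Real.sq_sqrt (by positivity)
  have hsqrt : √(2 * π * (v:ℝ)) = √π * s := by
    rw [show 2 * π * (v:ℝ) = π * (2 * (v:ℝ)) by ring, Real.sqrt_mul pi_pos.le]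
  have hbs : ((2 * (v:ℝ))⁻¹ : ℝ) ^ (-(3:ℝ)/2) = s ^ 3 := by
    rw [← hs2, show (-(3:ℝ)/2) = -((3:ℝ)/2) by ring, Real.rpow_neg (by positivity),
      Real.inv_rpow (by positivity), inv_inv, ← Real.rpow_natCast s 2,
      ← Real.rpow_mul hs.le]
    norm_num
  rw [hsqrt, hbs]
  have hπ : (0:ℝ) < √π := Real.sqrt_pos.mpr pi_pos
  field_simp
  linear_combination hs2

lemma integral_abs_gauss (c : ℝ) {v : ℝ≥0} (hv : v ≠ 0) :
    ∫ x, |x - c| ∂(gaussianReal c v) = √(2 * (v:ℝ) / π) := by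
  have hvp : (0:ℝ) < (v:ℝ) := by positivity
  have hb : (0:ℝ) < (2 * (v:ℝ))⁻¹ := by positivity
  have hred : ∫ x, |x - c| ∂(gaussianReal c v) = ∫ x, |x| ∂(gaussianReal 0 v) := by
    rw [gauss_eq_map c v, integral_map (measurable_add_const c).aemeasurable
      (Measurable.aestronglyMeasurable (by fun_prop))]
    simp
  rw [hred, integral_gaussianReal' hv]
  have heq : (fun x => gaussianPDFReal 0 v x * |x|)
      = fun x => (√(2 * π * v))⁻¹ * (|x| * rexp (-(2 * (v:ℝ))⁻¹ * |x| ^ 2)) := by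
    ext x
    rw [gpdf_eq, sub_zero, sq_abs]
    ring
  rw [heq, integral_const_mul,
    integral_comp_abs (f := fun t => t * rexp (-(2 * (v:ℝ))⁻¹ * t ^ 2))]
  have hIoi : ∫ x in Ioi (0:ℝ), x * rexp (-(2 * (v:ℝ))⁻¹ * x ^ 2)
      = ((2 * (v:ℝ))⁻¹)⁻¹ * (1/2) := by
    have := integral_rpow_mul_exp_neg_mul_rpow (p := 2) (q := 1) two_pos (by norm_num) hb
    simp_rw [show ∀ x : ℝ, x ^ (2:ℝ) = x ^ 2 from fun x => by
        rw [show (2:ℝ) = ((2:ℕ):ℝ) by norm_num, Real.rpow_natCast],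
      Real.rpow_one] at this
    rw [this, show (-((1:ℝ)+1)/2) = ((-1:ℤ):ℝ) by norm_num, Real.rpow_intCast,
      zpow_neg_one, show ((1:ℝ)+1)/2 = 1 by norm_num, Real.Gamma_one, mul_one]
  rw [hIoi]
  set s : ℝ := √(2 * (v:ℝ)) with hs_def
  have hs : 0 < s := Real.sqrt_pos.mpr (by positivity)
  have hs2 : s ^ 2 = 2 * (v:ℝ) := Real.sq_sqrt (by positivity)
  have hsqrt : √(2 * π * (v:ℝ)) = √π * s := by
    rw [show 2 * π * (v:ℝ) = π * (2 * (v:ℝ)) by ring, Real.sqrt_mul pi_pos.le]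
  have hdiv : √(2 * (v:ℝ) / π) = s / √π := by
    rw [Real.sqrt_div (by positivity)]
  have hπ : (0:ℝ) < √π := Real.sqrt_pos.mpr pi_pos
  rw [hsqrt, hdiv, inv_inv]
  field_simp
  linear_combination (-1) * hs2

lemma measurable_quant (m : ℕ) : Measurable (quant m) := by
  unfold quant
  exact ((measurable_from_top (f := fun z : ℤ => (z : ℝ))).comp
    ((measurable_id.const_mul ((m:ℝ))).floor)).div_const _

lemma quant_err_nonneg {m : ℕ} (hm : 1 ≤ m) (x : ℝ) : 0 ≤ x - quant m x := by
  have hm' : (0:ℝ) < m := by exact_mod_cast hm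
  have h1 : (⌊(m:ℝ) * x⌋ : ℝ) ≤ (m:ℝ) * x := Int.floor_le _
  rw [quant, sub_nonneg, div_le_iff₀ hm']
  calc ((⌊(m:ℝ) * x⌋ : ℤ) : ℝ) ≤ (m:ℝ) * x := h1
  _ = x * m := mul_comm _ _

lemma quant_err_le {m : ℕ} (hm : 1 ≤ m) (x : ℝ) : x - quant m x ≤ 1 / m := by
  have hm' : (0:ℝ) < m := by exact_mod_cast hm
  have h2 : (m:ℝ) * x < (⌊(m:ℝ) * x⌋ : ℝ) + 1 := Int.lt_floor_add_one _
  rw [quant, sub_le_iff_le_add, ← add_div, le_div_iff₀ hm']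
  nlinarith [h2]

end Aux

/-- for a real Gaussian `X` with mean `c` and variance `σ² = v > 0`, the
Bussgang coefficient `a = Cov(X, [X]_m)/σ²` satisfies `|1 − a| ≤ (1/m)·√(2/(π σ²))`. -/
theorem stmt11 {Ω : Type*} [MeasurableSpace Ω] (μ : Measure Ω) [IsProbabilityMeasure μ]
    (X : Ω → ℝ) (hX : Measurable X) (c : ℝ) (v : ℝ≥0) (hv : 0 < v)
    (hlaw : μ.map X = gaussianReal c v) (m : ℕ) (hm : 1 ≤ m) :
    |1 - cov μ X (fun ω => quant m (X ω)) / (v : ℝ)| ≤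
      (1 / m) * Real.sqrt (2 / (Real.pi * (v : ℝ))) := by
  have hv' : v ≠ 0 := hv.ne'
  have hvp : (0:ℝ) < (v:ℝ) := by positivity
  have hm' : (0:ℝ) < m := by exact_mod_cast hm
  set G := gaussianReal c v with hG
  -- transfer of integrals from Ω to ℝ
  have hXi : ∀ {f : ℝ → ℝ}, Measurable f → ∫ ω, f (X ω) ∂μ = ∫ x, f x ∂G := by
    intro f hf
    rw [← hlaw]
    exact (integral_map hX.aemeasurable hf.aestronglyMeasurable).symm
  -- derived quantities
  set e : ℝ → ℝ := fun x => x - quant m x with he_def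
  have he_meas : Measurable e := measurable_id.sub (measurable_quant m)
  have he0 : ∀ x, 0 ≤ e x := quant_err_nonneg hm
  have he1 : ∀ x, e x ≤ 1 / m := quant_err_le hm
  have he_int : Integrable e G := by
    refine integrable_gauss_of_bound c hv' he_meas (1/m) 0 fun x => ?_
    rw [abs_of_nonneg (he0 x), zero_mul, add_zero]
    exact he1 x
  have hid_int : Integrable (fun x : ℝ => x) G := by
    refine integrable_gauss_of_bound c hv' measurable_id (1 + |c|) 1 fun x => ?_
    rw [one_mul]
    nlinarith [abs_sub_abs_le_abs_sub x c, sq_abs (x - c), sq_nonneg (|x - c| - 1),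
      abs_nonneg (x - c), abs_nonneg c, abs_nonneg x]
  have hsq_int : Integrable (fun x => (x - c)^2) G := integrable_sq_gauss c hv'
  have habs_int : Integrable (fun x => |x - c|) G := by
    refine integrable_gauss_of_bound c hv' (by fun_prop) 1 1 fun x => ?_
    rw [abs_abs, one_mul]
    nlinarith [sq_nonneg (|x - c| - 1), abs_nonneg (x - c), sq_abs (x - c)]
  have hquant_eq : quant m = fun x => x - e x := by
    ext x; simp only [he_def]; ring
  have hquant_int : Integrable (quant m) G := by
    rw [hquant_eq]; exact hid_int.sub he_int
  set q : ℝ := ∫ x, quant m x ∂G with hq_def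
  set ebar : ℝ := ∫ x, e x ∂G with hebar_def
  have hEid : ∫ x, x ∂G = c := integral_id_gauss c hv'
  have hq : q = c - ebar := by
    rw [hq_def, hquant_eq, integral_sub hid_int he_int, hEid, hebar_def]
  have hebar0 : 0 ≤ ebar := integral_nonneg he0
  have hebar1 : ebar ≤ 1 / m := by
    calc ebar ≤ ∫ _x, (1:ℝ)/m ∂G := integral_mono he_int (integrable_const _) he1
    _ = 1/m := by simp
  -- covariance rewriting
  have hEX : ∫ ω, X ω ∂μ = c :=
    (hXi (f := fun x => x) measurable_id).trans hEid
  have hEY : ∫ ω, quant m (X ω) ∂μ = q := hXi (measurable_quant m)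
  have hf2_meas : Measurable fun x => (x - c) * (e x - ebar) :=
    (measurable_id.sub_const c).mul (he_meas.sub_const ebar)
  have hf2_int : Integrable (fun x => (x - c) * (e x - ebar)) G := by
    refine integrable_gauss_of_bound c hv' hf2_meas (1/m + |ebar|) (1/m + |ebar|)
      fun x => ?_
    have h1 : |e x - ebar| ≤ 1/m + |ebar| := by
      calc |e x - ebar| ≤ |e x| + |ebar| := abs_sub _ _
      _ ≤ 1/m + |ebar| := by
          have := abs_of_nonneg (he0 x)
          rw [this]
          linarith [he1 x]
    have h2 : |x - c| ≤ 1 + (x - c)^2 := by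
      nlinarith [sq_nonneg (|x - c| - 1), abs_nonneg (x - c), sq_abs (x - c)]
    have h3 : (0:ℝ) ≤ 1/m + |ebar| := by positivity
    calc |(x - c) * (e x - ebar)| = |x - c| * |e x - ebar| := abs_mul _ _
    _ ≤ (1 + (x - c)^2) * (1/m + |ebar|) :=
        mul_le_mul h2 h1 (abs_nonneg _) (by positivity)
    _ = 1/m + |ebar| + (1/m + |ebar|) * (x - c)^2 := by ring
  have hcov : cov μ X (fun ω => quant m (X ω))
      = (v:ℝ) - ∫ x, (x - c) * (e x - ebar) ∂G := by
    unfold cov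
    rw [hEX, hEY]
    rw [show (∫ ω, (X ω - c) * ((fun ω => quant m (X ω)) ω - q) ∂μ)
        = ∫ x, (x - c) * (quant m x - q) ∂G from
      hXi ((measurable_id.sub_const c).mul ((measurable_quant m).sub_const q))]
    have hptw : ∀ x : ℝ, (x - c) * (quant m x - q)
        = (x - c)^2 - (x - c) * (e x - ebar) := by
      intro x
      rw [hq]
      simp only [he_def]
      ring
    rw [integral_congr_ae (ae_of_all _ hptw), integral_sub hsq_int hf2_int,
      integral_sq_gauss c hv']
  set D : ℝ := ∫ x, (x - c) * (e x - ebar) ∂G with hD_def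
  -- bound on |D|
  have hDbound : |D| ≤ (1/m) * Real.sqrt (2 * (v:ℝ) / Real.pi) := by
    have h1 : |D| ≤ ∫ x, |(x - c) * (e x - ebar)| ∂G := by
      rw [hD_def]
      simpa only [Real.norm_eq_abs] using
        norm_integral_le_integral_norm (μ := G) (fun x => (x - c) * (e x - ebar))
    have h2 : ∫ x, |(x - c) * (e x - ebar)| ∂G ≤ ∫ x, (1/m) * |x - c| ∂G := by
      refine integral_mono hf2_int.abs (habs_int.const_mul _) fun x => ?_
      have hee : |e x - ebar| ≤ 1/m := by
        rw [abs_le]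
        clear_value e ebar
        constructor
        · linarith [he0 x, hebar1]
        · linarith [he1 x, hebar0]
      calc |(x - c) * (e x - ebar)| = |x - c| * |e x - ebar| := abs_mul _ _
      _ ≤ |x - c| * (1/m) := mul_le_mul_of_nonneg_left hee (abs_nonneg _)
      _ = (1/m) * |x - c| := by ring
    have h3 : ∫ x, (1/m) * |x - c| ∂G = (1/m) * Real.sqrt (2 * (v:ℝ) / Real.pi) := by
      rw [integral_const_mul, integral_abs_gauss c hv']
    linarith [h1, h2, h3.symm ▸ h2]
  -- final computation
  have hfinal : 1 - cov μ X (fun ω => quant m (X ω)) / (v:ℝ) = D / (v:ℝ) := by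
    rw [hcov, sub_div, div_self hvp.ne']
    ring
  rw [hfinal, abs_div, abs_of_pos hvp]
  have hsqrt_id : Real.sqrt (2 * (v:ℝ) / Real.pi) / (v:ℝ)
      = Real.sqrt (2 / (Real.pi * (v:ℝ))) := by
    calc Real.sqrt (2 * (v:ℝ) / Real.pi) / (v:ℝ)
        = Real.sqrt (2 / (Real.pi * (v:ℝ)) * (v:ℝ)^2) / (v:ℝ) := by
          rw [show 2 / (Real.pi * (v:ℝ)) * (v:ℝ)^2 = 2 * (v:ℝ) / Real.pi by
            field_simp]
      _ = (Real.sqrt (2 / (Real.pi * (v:ℝ))) * Real.sqrt ((v:ℝ)^2)) / (v:ℝ) := by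
          rw [Real.sqrt_mul (by positivity)]
      _ = Real.sqrt (2 / (Real.pi * (v:ℝ))) := by
          rw [Real.sqrt_sq hvp.le, mul_div_assoc, div_self hvp.ne', mul_one]
  calc |D| / (v:ℝ) ≤ ((1/m) * Real.sqrt (2 * (v:ℝ) / Real.pi)) / (v:ℝ) := by gcongr
    _ = (1/m) * (Real.sqrt (2 * (v:ℝ) / Real.pi) / (v:ℝ)) := by ring
    _ = (1/m) * Real.sqrt (2 / (Real.pi * (v:ℝ))) := by rw [hsqrt_id]
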